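/- arXiv:1306.0260 — 2 statements merged into one kernel-verified Lean document; each statement's English description precedes it below -/
import Mathlib

section
/- Consider the optimization problem: minimize Σ_{i=1}^m y_i^T R_i y_i over vectors y_1,...,y_m ∈ R^n and symmetric positive definite matrices R_1,...,R_m, subject to Σ_i R_i y_i = b and Σ_i R_i = S, where S is a given symmetric positive definite matrix and b a given vector. A feasible point (y_i, R_i)_{i=1}^m is optimal if and only if y_i = S^{-1} b for all i. Moreover, the optimal value equals b^T S^{-1} b. -/
open Matrix Finset

/-! Completing the square: if `∑ Rᵢ yᵢ = S z` with `S = ∑ Rᵢ`, then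
`∑ yᵢᵀ Rᵢ yᵢ = zᵀ S z + ∑ (yᵢ - z)ᵀ Rᵢ (yᵢ - z)`. For `z = S⁻¹ b` the first term is the
constant `bᵀ S⁻¹ b`, and since every `Rᵢ` is positive definite the second is nonnegative and
vanishes exactly when all `yᵢ = z`. -/

namespace Matrix

variable {ι n α : Type*} [Fintype ι] [Fintype n]

theorem IsSymm.dotProduct_mulVec_comm [CommSemiring α] {A : Matrix n n α} (hA : A.IsSymm)
    (v w : n → α) : v ⬝ᵥ (A *ᵥ w) = w ⬝ᵥ (A *ᵥ v) := by
  rw [dotProduct_mulVec, ← mulVec_transpose, hA.eq, dotProduct_comm]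

theorem sum_dotProduct_mulVec_eq_add_sum_sub_of_isSymm [CommRing α] {R : ι → Matrix n n α}
    (hR : ∀ i, (R i).IsSymm) {y : ι → n → α} {z : n → α}
    (hy : ∑ i, R i *ᵥ y i = (∑ i, R i) *ᵥ z) :
    ∑ i, y i ⬝ᵥ (R i *ᵥ y i)
      = z ⬝ᵥ ((∑ i, R i) *ᵥ z) + ∑ i, (y i - z) ⬝ᵥ (R i *ᵥ (y i - z)) := by
  have expand (i : ι) : (y i - z) ⬝ᵥ (R i *ᵥ (y i - z))
      = y i ⬝ᵥ (R i *ᵥ y i) - 2 * (z ⬝ᵥ (R i *ᵥ y i)) + z ⬝ᵥ (R i *ᵥ z) := by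
    rw [mulVec_sub, dotProduct_sub, sub_dotProduct, sub_dotProduct,
      (hR i).dotProduct_mulVec_comm (y i) z]
    ring
  have cross : ∑ i, z ⬝ᵥ (R i *ᵥ y i) = z ⬝ᵥ ((∑ i, R i) *ᵥ z) := by
    rw [← dotProduct_sum, hy]
  have diag : ∑ i, z ⬝ᵥ (R i *ᵥ z) = z ⬝ᵥ ((∑ i, R i) *ᵥ z) := by
    rw [← dotProduct_sum, sum_mulVec]
  simp only [expand, sum_add_distrib, sum_sub_distrib, ← mul_sum, cross, diag]
  ring

theorem PosDef.dotProduct_mulVec_self_nonneg {A : Matrix n n ℝ} (hA : A.PosDef) (x : n → ℝ) :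
    0 ≤ x ⬝ᵥ (A *ᵥ x) := by
  simpa using hA.posSemidef.dotProduct_mulVec_nonneg x

theorem PosDef.sum_dotProduct_mulVec_nonneg {R : ι → Matrix n n ℝ} (hR : ∀ i, (R i).PosDef)
    (x : ι → n → ℝ) : 0 ≤ ∑ i, x i ⬝ᵥ (R i *ᵥ x i) :=
  sum_nonneg fun i _ ↦ (hR i).dotProduct_mulVec_self_nonneg (x i)

theorem PosDef.sum_dotProduct_mulVec_eq_zero_iff {R : ι → Matrix n n ℝ}
    (hR : ∀ i, (R i).PosDef) {x : ι → n → ℝ} :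
    ∑ i, x i ⬝ᵥ (R i *ᵥ x i) = 0 ↔ ∀ i, x i = 0 := by
  rw [sum_eq_zero_iff_of_nonneg fun i _ ↦ (hR i).dotProduct_mulVec_self_nonneg (x i)]
  refine ⟨fun h i ↦ by_contra fun hx ↦ ?_, fun h i _ ↦ by simp [h]⟩
  simpa [h i (mem_univ i)] using (hR i).dotProduct_mulVec_pos hx

section Feasible

variable {S : Matrix n n ℝ} {b z : n → ℝ} {R : ι → Matrix n n ℝ} {y : ι → n → ℝ}

theorem PosDef.sum_dotProduct_mulVec_eq_add_sum_sub (hz : S *ᵥ z = b) (hR : ∀ i, (R i).PosDef)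
    (hRS : ∑ i, R i = S) (hRy : ∑ i, R i *ᵥ y i = b) :
    ∑ i, y i ⬝ᵥ (R i *ᵥ y i) = b ⬝ᵥ z + ∑ i, (y i - z) ⬝ᵥ (R i *ᵥ (y i - z)) := by
  have hsymm (i : ι) : (R i).IsSymm := by simpa using (hR i).isHermitian
  rw [sum_dotProduct_mulVec_eq_add_sum_sub_of_isSymm hsymm (by rw [hRS, hz, hRy]), hRS, hz,
    dotProduct_comm]

theorem PosDef.dotProduct_le_sum_dotProduct_mulVec (hz : S *ᵥ z = b) (hR : ∀ i, (R i).PosDef)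
    (hRS : ∑ i, R i = S) (hRy : ∑ i, R i *ᵥ y i = b) :
    b ⬝ᵥ z ≤ ∑ i, y i ⬝ᵥ (R i *ᵥ y i) := by
  rw [sum_dotProduct_mulVec_eq_add_sum_sub hz hR hRS hRy]
  exact le_add_of_nonneg_right (sum_dotProduct_mulVec_nonneg hR _)

theorem PosDef.sum_dotProduct_mulVec_eq_iff (hz : S *ᵥ z = b) (hR : ∀ i, (R i).PosDef)
    (hRS : ∑ i, R i = S) (hRy : ∑ i, R i *ᵥ y i = b) :
    ∑ i, y i ⬝ᵥ (R i *ᵥ y i) = b ⬝ᵥ z ↔ ∀ i, y i = z := by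
  rw [sum_dotProduct_mulVec_eq_add_sum_sub hz hR hRS hRy, add_eq_left,
    sum_dotProduct_mulVec_eq_zero_iff hR]
  simp only [sub_eq_zero]

end Feasible

end Matrix

theorem stmt5_general (n m : ℕ)
    (S : Matrix (Fin n) (Fin n) ℝ) (hS : S.PosDef) (b : Fin n → ℝ)
    (R : Fin m → Matrix (Fin n) (Fin n) ℝ) (y : Fin m → (Fin n → ℝ))
    (hRpd : ∀ i, (R i).PosDef) (hRS : ∑ i, R i = S) (hRyb : ∑ i, (R i) *ᵥ y i = b) :
    ((∀ (R' : Fin m → Matrix (Fin n) (Fin n) ℝ) (y' : Fin m → (Fin n → ℝ)),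
        (∀ i, (R' i).PosDef) → (∑ i, R' i = S) → (∑ i, (R' i) *ᵥ y' i = b) →
        ∑ i, y i ⬝ᵥ ((R i) *ᵥ y i) ≤ ∑ i, y' i ⬝ᵥ ((R' i) *ᵥ y' i))
      ↔ (∀ i, y i = S⁻¹ *ᵥ b)) ∧
    ((∀ i, y i = S⁻¹ *ᵥ b) →
      ∑ i, y i ⬝ᵥ ((R i) *ᵥ y i) = b ⬝ᵥ (S⁻¹ *ᵥ b)) := by
  set z := S⁻¹ *ᵥ b
  have hSz : S *ᵥ z = b := by
    rw [mulVec_mulVec, mul_nonsing_inv _ ((isUnit_iff_isUnit_det S).1 hS.isUnit), one_mulVec]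
  have value_eq_iff := PosDef.sum_dotProduct_mulVec_eq_iff hSz hRpd hRS hRyb
  refine ⟨⟨fun hopt ↦ value_eq_iff.1 ?_, fun hy R' y' hR' hS' hb' ↦ ?_⟩, value_eq_iff.2⟩
  · have equalizing_feasible : ∑ i, R i *ᵥ z = b := by rw [← sum_mulVec, hRS, hSz]
    have equalizing_value :=
      (PosDef.sum_dotProduct_mulVec_eq_iff hSz hRpd hRS equalizing_feasible).2 fun _ ↦ rfl
    refine le_antisymm ?_ (PosDef.dotProduct_le_sum_dotProduct_mulVec hSz hRpd hRS hRyb)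
    exact equalizing_value ▸ hopt R (fun _ ↦ z) hRpd hRS equalizing_feasible
  · exact (value_eq_iff.2 hy).trans_le
      (PosDef.dotProduct_le_sum_dotProduct_mulVec hSz hR' hS' hb')

/-- a feasible point of the equality-constrained quadratic program is optimal
iff all `y i = S⁻¹ b`; the optimal value is `bᵀ S⁻¹ b`. -/
theorem stmt5 (n m : ℕ) (hn : 1 ≤ n) (hm : 1 ≤ m)
    (S : Matrix (Fin n) (Fin n) ℝ) (hS : S.PosDef) (b : Fin n → ℝ)
    (R : Fin m → Matrix (Fin n) (Fin n) ℝ) (y : Fin m → (Fin n → ℝ))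
    (hRpd : ∀ i, (R i).PosDef) (hRS : ∑ i, R i = S) (hRyb : ∑ i, (R i) *ᵥ y i = b) :
    ((∀ (R' : Fin m → Matrix (Fin n) (Fin n) ℝ) (y' : Fin m → (Fin n → ℝ)),
        (∀ i, (R' i).PosDef) → (∑ i, R' i = S) → (∑ i, (R' i) *ᵥ y' i = b) →
        ∑ i, y i ⬝ᵥ ((R i) *ᵥ y i) ≤ ∑ i, y' i ⬝ᵥ ((R' i) *ᵥ y' i))
      ↔ (∀ i, y i = S⁻¹ *ᵥ b)) ∧
    ((∀ i, y i = S⁻¹ *ᵥ b) →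
      ∑ i, y i ⬝ᵥ ((R i) *ᵥ y i) = b ⬝ᵥ (S⁻¹ *ᵥ b)) :=
  stmt5_general n m S hS b R y hRpd hRS hRyb
end

section
/- Let S ∈ S_+^n, b ∈ R^n, and suppose R_1,...,R_m ∈ S_+^n satisfy Σ_i R_i = S and y_1,...,y_m ∈ R^n satisfy Σ_i R_i y_i = b. Then Σ_i y_i^T R_i y_i ≥ b^T S^{-1} b. -/
/-!
For symmetric positive semidefinite `R` and any vectors `x, y`, expanding
`0 ≤ (y - x)ᵀ R (y - x)` gives `2 xᵀ R y - xᵀ R x ≤ yᵀ R y`. Summing over `i` and using the two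
constraints turns the left side into `2 xᵀ b - xᵀ S x`, which equals `bᵀ S⁻¹ b` at `x = S⁻¹ b`.
-/

open Matrix Finset

section

variable {n : Type*} [Fintype n]

lemma Matrix.IsSymm.dotProduct_mulVec_comm_s6 {A : Matrix n n ℝ} (hA : A.IsSymm) (x y : n → ℝ) :
    x ⬝ᵥ (A *ᵥ y) = y ⬝ᵥ (A *ᵥ x) := by
  rw [dotProduct_mulVec, ← mulVec_transpose, hA.eq, dotProduct_comm]

lemma Matrix.PosSemidef.two_mul_dotProduct_mulVec_sub_le {R : Matrix n n ℝ} (hR : R.PosSemidef)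
    (x y : n → ℝ) : 2 * (x ⬝ᵥ (R *ᵥ y)) - x ⬝ᵥ (R *ᵥ x) ≤ y ⬝ᵥ (R *ᵥ y) := by
  have hsq : 0 ≤ (y - x) ⬝ᵥ (R *ᵥ (y - x)) := by simpa using hR.dotProduct_mulVec_nonneg (y - x)
  have hsymm := (isHermitian_iff_isSymm.mp hR.isHermitian).dotProduct_mulVec_comm_s6 x y
  simp only [mulVec_sub, dotProduct_sub, sub_dotProduct] at hsq
  linarith

lemma Matrix.two_mul_dotProduct_sum_sub_le_sum_of_posSemidef {ι : Type*} [Fintype ι]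
    {R : ι → Matrix n n ℝ} (hR : ∀ i, (R i).PosSemidef) (x : n → ℝ) (y : ι → n → ℝ) :
    2 * (x ⬝ᵥ ∑ i, R i *ᵥ y i) - x ⬝ᵥ ((∑ i, R i) *ᵥ x) ≤ ∑ i, y i ⬝ᵥ (R i *ᵥ y i) := by
  rw [dotProduct_sum, sum_mulVec, dotProduct_sum, mul_sum, ← sum_sub_distrib]
  exact sum_le_sum fun i _ => (hR i).two_mul_dotProduct_mulVec_sub_le x (y i)

end

theorem stmt6_general (n m : ℕ)
    (S : Matrix (Fin n) (Fin n) ℝ) (hS : S.PosDef) (b : Fin n → ℝ)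
    (R : Fin m → Matrix (Fin n) (Fin n) ℝ) (y : Fin m → (Fin n → ℝ))
    (hRpd : ∀ i, (R i).PosDef) (hRS : ∑ i, R i = S) (hRyb : ∑ i, (R i) *ᵥ y i = b) :
    b ⬝ᵥ (S⁻¹ *ᵥ b) ≤ ∑ i, y i ⬝ᵥ ((R i) *ᵥ y i) := by
  have hSx : S *ᵥ (S⁻¹ *ᵥ b) = b := by
    rw [mulVec_mulVec, mul_nonsing_inv _ (isUnit_iff_ne_zero.mpr hS.det_pos.ne'), one_mulVec]
  have h := two_mul_dotProduct_sum_sub_le_sum_of_posSemidef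
    (fun i => (hRpd i).posSemidef) (S⁻¹ *ᵥ b) y
  rw [hRyb, hRS, hSx, dotProduct_comm] at h
  linarith

/-- under the constraints `∑ R i = S`, `∑ R i y i = b`,
the objective is at least `bᵀ S⁻¹ b`. -/
theorem stmt6 (n m : ℕ) (hn : 1 ≤ n) (hm : 1 ≤ m)
    (S : Matrix (Fin n) (Fin n) ℝ) (hS : S.PosDef) (b : Fin n → ℝ)
    (R : Fin m → Matrix (Fin n) (Fin n) ℝ) (y : Fin m → (Fin n → ℝ))
    (hRpd : ∀ i, (R i).PosDef) (hRS : ∑ i, R i = S) (hRyb : ∑ i, (R i) *ᵥ y i = b) :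
    b ⬝ᵥ (S⁻¹ *ᵥ b) ≤ ∑ i, y i ⬝ᵥ ((R i) *ᵥ y i) :=
  stmt6_general n m S hS b R y hRpd hRS hRyb
end
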